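/- Let W be a squarefree monomial ideal in a polynomial ring S over a field and let ν be the product of all the variables of S. Then W^(ℓ) = W^ℓ for all ℓ ≥ 1 if and only if ν ∈ (W^{r+1})^{[2]} : W^{2r+1} for every r ≥ 0. -/

import Mathlib

open MvPolynomial

namespace SFM

variable {N : ℕ}

/-- total degree of an exponent vector -/
def tot (a : Fin N →₀ ℕ) : ℕ := ∑ i, a i

/-- sum of entries over a finset -/
def degT (T : Finset (Fin N)) (a : Fin N →₀ ℕ) : ℕ := ∑ i ∈ T, a i

/-- the all-ones vector -/
noncomputable def ones (N : ℕ) : Fin N →₀ ℕ := Finsupp.equivFunOnFinite.symm 1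

@[simp] lemma ones_apply (i : Fin N) : ones N i = 1 := rfl

variable (S : Set (Fin N →₀ ℕ))

/-- sumsets: k-fold sums of elements of S (exponents of generators of W^k) -/
def sumPow : ℕ → Set (Fin N →₀ ℕ)
  | 0 => {0}
  | (k+1) => Set.image2 (· + ·) S (sumPow k)

/-- `x^a ∈ W^k` (combinatorially) -/
def Mem (k : ℕ) (a : Fin N →₀ ℕ) : Prop := ∃ g ∈ sumPow S k, g ≤ a

/-- T is a transversal of the supports of S -/
def Trans (T : Finset (Fin N)) : Prop := ∀ d ∈ S, ∃ i ∈ T, d i ≠ 0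

/-- `x^a ∈ W^{(ℓ)}` (combinatorially) -/
def Symb (ℓ : ℕ) (a : Fin N →₀ ℕ) : Prop := ∀ T : Finset (Fin N), Trans S T → ℓ ≤ degT T a

/-- the key condition -/
def Cond : Prop := ∀ r : ℕ, ∀ a : Fin N →₀ ℕ, Mem S (2*r+1) a →
    ∃ d, Mem S (r+1) d ∧ d + d ≤ a + ones N

variable {S}

lemma degT_mono_set {T T' : Finset (Fin N)} (h : T ⊆ T') (a : Fin N →₀ ℕ) :
    degT T a ≤ degT T' a := Finset.sum_le_sum_of_subset h

lemma degT_mono {a b : Fin N →₀ ℕ} (h : a ≤ b) (T : Finset (Fin N)) :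
    degT T a ≤ degT T b := Finset.sum_le_sum fun i _ => h i

lemma degT_add (T : Finset (Fin N)) (a b : Fin N →₀ ℕ) :
    degT T (a + b) = degT T a + degT T b := by
  simp [degT, Finsupp.add_apply, Finset.sum_add_distrib]

lemma degT_le_tot (T : Finset (Fin N)) (a : Fin N →₀ ℕ) : degT T a ≤ tot a :=
  degT_mono_set (Finset.subset_univ T) a

lemma tot_eq_zero {a : Fin N →₀ ℕ} (h : tot a = 0) : a = 0 := by
  ext i
  have := Finset.sum_eq_zero_iff.mp h i (Finset.mem_univ i)
  simpa using this

lemma Mem.mono {k : ℕ} {a b : Fin N →₀ ℕ} (h : Mem S k a) (hab : a ≤ b) : Mem S k b := by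
  obtain ⟨g, hg, hga⟩ := h
  exact ⟨g, hg, hga.trans hab⟩

lemma sumPow_add {j k : ℕ} {g h : Fin N →₀ ℕ} (hg : g ∈ sumPow S j) (hh : h ∈ sumPow S k) :
    g + h ∈ sumPow S (j + k) := by
  induction j generalizing g with
  | zero =>
      have : g = 0 := hg
      subst this
      rw [Nat.zero_add, zero_add]
      exact hh
  | succ j ih =>
      obtain ⟨d, hd, g', hg', rfl⟩ := hg
      have : j + 1 + k = (j + k) + 1 := by omega
      rw [this]
      exact ⟨d, hd, g' + h, ih hg', (add_assoc _ _ _).symm⟩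

lemma Mem.add {j k : ℕ} {a b : Fin N →₀ ℕ} (ha : Mem S j a) (hb : Mem S k b) :
    Mem S (j + k) (a + b) := by
  obtain ⟨g, hg, hga⟩ := ha
  obtain ⟨h, hh, hhb⟩ := hb
  exact ⟨g + h, sumPow_add hg hh, add_le_add hga hhb⟩

lemma Mem.zero (a : Fin N →₀ ℕ) : Mem S 0 a := ⟨0, rfl, zero_le⟩

lemma Mem.anti {j k : ℕ} (hjk : j ≤ k) {a : Fin N →₀ ℕ} (h : Mem S k a) : Mem S j a := by
  induction k with
  | zero => exact (Nat.le_zero.mp hjk) ▸ h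
  | succ k ih =>
      rcases Nat.lt_or_ge j (k+1) with hlt | hge
      · obtain ⟨g, hg, hga⟩ := h
        obtain ⟨d, hd, g', hg', rfl⟩ := hg
        exact ih (Nat.lt_succ_iff.mp hlt) ⟨g', hg', le_trans (le_add_self) hga⟩
      · exact (Nat.le_antisymm hjk hge) ▸ h

lemma Mem.symb {k : ℕ} {a : Fin N →₀ ℕ} (h : Mem S k a) : Symb S k a := by
  intro T hT
  obtain ⟨g, hg, hga⟩ := h
  refine le_trans ?_ (degT_mono hga T)
  clear hga
  induction k generalizing g with
  | zero => exact Nat.zero_le _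
  | succ k ih =>
      obtain ⟨d, hd, g', hg', rfl⟩ := hg
      obtain ⟨i, hiT, hdi⟩ := hT d hd
      have h1 : 1 ≤ degT T d := by
        calc 1 ≤ d i := Nat.one_le_iff_ne_zero.mpr hdi
        _ ≤ degT T d := Finset.single_le_sum (fun _ _ => Nat.zero_le _) hiT
      rw [degT_add]
      have := ih g' hg'
      omega

lemma Symb.mono {ℓ ℓ' : ℕ} (h : ℓ' ≤ ℓ) {a : Fin N →₀ ℕ} (hs : Symb S ℓ a) : Symb S ℓ' a :=
  fun T hT => le_trans h (hs T hT)

lemma Symb.sub {n : ℕ} {a r : Fin N →₀ ℕ} (hs : Symb S n a) :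
    Symb S (n - tot r) (a - r) := by
  intro T hT
  have h1 := hs T hT
  have h2 : degT T a ≤ degT T (a - r) + degT T r := by
    rw [← degT_add]
    exact degT_mono (fun i => by simp [Finsupp.tsub_apply, Finsupp.add_apply]; omega) T
  have h3 := degT_le_tot T r
  omega

end SFM

namespace SFM

variable {N : ℕ} {S : Set (Fin N →₀ ℕ)}

/-- base case: radicality, uses squarefreeness -/
lemma symb_one (hsf : ∀ d ∈ S, ∀ i, d i ≤ 1) {a : Fin N →₀ ℕ}
    (h : Symb S 1 a) : Mem S 1 a := by
  by_contra hmem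
  have hT : Trans S (Finset.univ.filter fun i => a i = 0) := by
    intro d hd
    by_contra hc
    push_neg at hc
    have hda : d ≤ a := by
      intro i
      by_cases hi : a i = 0
      · have := hc i (Finset.mem_filter.mpr ⟨Finset.mem_univ i, hi⟩)
        omega
      · have := hsf d hd i
        omega
    exact hmem ⟨d, ⟨d, hd, 0, rfl, (add_zero d)⟩, hda⟩
  have := h _ hT
  have hz : degT (Finset.univ.filter fun i => a i = 0) a = 0 := by
    apply Finset.sum_eq_zero
    intro i hi
    exact (Finset.mem_filter.mp hi).2
  omega

/-- half-up rounding -/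
noncomputable def hu (a : Fin N →₀ ℕ) : Fin N →₀ ℕ :=
  Finsupp.mapRange (fun n => (n + 1) / 2) (by norm_num) a

@[simp] lemma hu_apply (a : Fin N →₀ ℕ) (i : Fin N) : hu a i = (a i + 1) / 2 := rfl

lemma hu_le (a : Fin N →₀ ℕ) : hu a + hu a ≤ a + ones N := by
  intro i
  simp [Finsupp.add_apply]
  omega

lemma degT_hu (T : Finset (Fin N)) (a : Fin N →₀ ℕ) :
    degT T a ≤ 2 * degT T (hu a) := by
  unfold degT
  rw [Finset.mul_sum]
  apply Finset.sum_le_sum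
  intro i _
  simp
  omega

/-- forward direction of the criterion -/
lemma cond_of_eq (heq : ∀ ℓ, 1 ≤ ℓ → ∀ a, Symb S ℓ a ↔ Mem S ℓ a) : Cond S := by
  intro r a hmem
  refine ⟨hu a, ?_, hu_le a⟩
  rw [← heq (r+1) (by omega)]
  intro T hT
  have h1 : 2*r+1 ≤ degT T a := hmem.symb T hT
  have := degT_hu T a
  omega

/-- the decomposition lemma -/
lemma decomp (K : ℕ) (v a : Fin N →₀ ℕ) (hc : K ≤ tot v) (hcap : ∀ i, v i ≤ K * a i) :
    ∃ m : Multiset (Fin N →₀ ℕ), Multiset.card m = K ∧ m.sum = v ∧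
      ∀ r ∈ m, r ≤ a ∧ 1 ≤ tot r := by
  induction K generalizing v with
  | zero =>
      refine ⟨0, rfl, ?_, by simp⟩
      simp only [Multiset.sum_zero]
      ext i
      have := hcap i
      simp at this ⊢
      omega
  | succ K ih =>
      by_cases hr : v - K • a = 0
      · -- all coordinates small: remove a single unit
        have hvi : ∃ i, 1 ≤ v i := by
          by_contra hno
          push_neg at hno
          have : tot v = 0 := Finset.sum_eq_zero fun i _ => by have := hno i; omega
          omega
        obtain ⟨i₀, hi₀⟩ := hvi
        have hsmall : ∀ i, v i ≤ K * a i := by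
          intro i
          have := DFunLike.congr_fun hr i
          simp [Finsupp.tsub_apply, Finsupp.smul_apply] at this
          omega
        set r : Fin N →₀ ℕ := Finsupp.single i₀ 1 with hrdef
        have hrv : r ≤ v := by
          intro i
          rcases eq_or_ne i i₀ with rfl | hne
          · simpa [hrdef] using hi₀
          · simp [hrdef, Finsupp.single_apply, Ne.symm hne]
        obtain ⟨m, hcard, hsum, hm⟩ := ih (v - r) (by
          have : tot (v - r) + tot r = tot v := by
            unfold tot
            rw [← Finset.sum_add_distrib]
            apply Finset.sum_congr rfl
            intro i _
            have := hrv i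
            simp [Finsupp.tsub_apply]
            omega
          have htotr : tot r = 1 := by simp [hrdef, tot, Finsupp.single_apply]
          omega) (by
          intro i
          have := hsmall i
          simp [Finsupp.tsub_apply]
          omega)
        refine ⟨r ::ₘ m, by simp [hcard], ?_, ?_⟩
        · rw [Multiset.sum_cons, hsum]
          ext i
          have := hrv i
          simp [Finsupp.tsub_apply, Finsupp.add_apply]
          omega
        · intro r' hr'
          rcases Multiset.mem_cons.mp hr' with rfl | hr'
          · constructor
            · intro i
              rcases eq_or_ne i i₀ with rfl | hne
              · have h1 := hcap i
                have := hi₀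
                simp [hrdef, Finsupp.single_apply]
                nlinarith
              · simp [hrdef, Finsupp.single_apply, Ne.symm hne]
            · simp [hrdef, tot, Finsupp.single_apply]
          · exact hm r' hr'
      · -- big coordinates: remove the excess
        set r : Fin N →₀ ℕ := v - K • a with hrdef
        have hri : ∀ i, r i = v i - K * a i := fun i => by
          simp [hrdef, Finsupp.tsub_apply, Finsupp.smul_apply]
        have hrv : r ≤ v := fun i => by rw [hri i]; omega
        have hra : r ≤ a := by
          intro i
          have h1 := hcap i
          have h2 : (K+1) * a i = K * a i + a i := by ring
          rw [hri i]
          omega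
        have htotr : 1 ≤ tot r := by
          rcases Nat.eq_zero_or_pos (tot r) with h0 | h1
          · exact absurd (tot_eq_zero h0) hr
          · exact h1
        -- remaining vector
        have hkey : ∀ i, (K+1) * ((v - r) i) ≥ K * v i := by
          intro i
          rw [Finsupp.tsub_apply, hri i]
          have := hcap i
          rcases Nat.le_total (v i) (K * a i) with h | h
          · have heq2 : v i - (v i - K * a i) = v i := by omega
            rw [heq2]
            nlinarith
          · have heq2 : v i - (v i - K * a i) = K * a i := by omega
            rw [heq2]
            nlinarith
        obtain ⟨m, hcard, hsum, hm⟩ := ih (v - r) (by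
          have h2 : (K+1) * tot (v - r) ≥ K * tot v := by
            unfold tot
            rw [Finset.mul_sum, Finset.mul_sum]
            exact Finset.sum_le_sum fun i _ => hkey i
          have h3 : K * (K+1) ≤ K * tot v := Nat.mul_le_mul_left K hc
          nlinarith) (by
          intro i
          rw [Finsupp.tsub_apply, hri i]
          have h1 := hcap i
          have h2 : (K+1) * a i = K * a i + a i := by ring
          omega)
        refine ⟨r ::ₘ m, by simp [hcard], ?_, ?_⟩
        · rw [Multiset.sum_cons, hsum]
          ext i
          have := hrv i
          simp [Finsupp.tsub_apply, Finsupp.add_apply]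
          omega
        · intro r' hr'
          rcases Multiset.mem_cons.mp hr' with rfl | hr'
          · exact ⟨hra, htotr⟩
          · exact hm r' hr'

end SFM

namespace SFM

variable {N : ℕ} {S : Set (Fin N →₀ ℕ)}

lemma tot_multiset_sum (mm : Multiset (Fin N →₀ ℕ)) : tot mm.sum = (mm.map tot).sum := by
  induction mm using Multiset.induction with
  | empty => simp [tot]
  | cons x s ih =>
      simp only [Multiset.sum_cons, Multiset.map_cons, Multiset.sum_cons]
      rw [← ih]
      simp [tot, Finsupp.add_apply, Finset.sum_add_distrib]

lemma mul_split (x a b : ℕ) (h : b ≤ a) : x * a = x * (a - b) + x * b := by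
  rw [← Nat.mul_add]
  congr 1
  omega

/-- descent along the splitting condition -/
lemma descent (hc : Cond S) (e : ℕ) :
    ∀ m : ℕ, ∀ b : Fin N →₀ ℕ, Mem S (2^e * m + 1) ((2^e) • b) → Mem S (m+1) b := by
  induction e with
  | zero => intro m b h; simpa using h
  | succ e ih =>
      intro m b h
      have h2 : Mem S (2 * (2^e * m) + 1) ((2^(e+1)) • b) := by
        have : 2 * (2^e * m) + 1 = 2^(e+1) * m + 1 := by ring_nf
        rw [this]; exact h
      obtain ⟨d, hd, hle⟩ := hc (2^e * m) _ h2
      have hdb : d ≤ (2^e) • b := by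
        intro i
        have h1 := hle i
        simp [Finsupp.add_apply, Finsupp.smul_apply] at h1
        have hpow : (2:ℕ)^(e+1) * b i = 2 * (2^e * b i) := by ring
        rw [hpow] at h1
        simp [Finsupp.smul_apply]
        omega
      exact ih m b (hd.mono hdb)

/-- sum over a multiset of pieces -/
lemma Mem.multiset_sum (f : (Fin N →₀ ℕ) → ℕ) (g : (Fin N →₀ ℕ) → (Fin N →₀ ℕ))
    (m : Multiset (Fin N →₀ ℕ)) (h : ∀ r ∈ m, Mem S (f r) (g r)) :
    Mem S ((m.map f).sum) ((m.map g).sum) := by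
  induction m using Multiset.induction with
  | empty => simpa using Mem.zero 0
  | cons r m ih =>
      simp only [Multiset.map_cons, Multiset.sum_cons]
      exact (h r (Multiset.mem_cons_self r m)).add
        (ih fun r' hr' => h r' (Multiset.mem_cons_of_mem hr'))

/-- the main combinatorial theorem, backward direction -/
lemma eq_of_cond (hsf : ∀ d ∈ S, ∀ i, d i ≤ 1) (hc : Cond S) :
    ∀ ℓ, 1 ≤ ℓ → ∀ a, Symb S ℓ a ↔ Mem S ℓ a := by
  intro ℓ
  induction ℓ using Nat.strong_induction_on with
  | _ n IH =>
    intro hn a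
    constructor
    swap
    · exact fun h => h.symb
    intro hs
    rcases Nat.lt_or_ge n 2 with h2 | h2
    · -- n = 1
      interval_cases n
      exact symb_one hsf hs
    by_cases h0 : (0 : Fin N →₀ ℕ) ∈ S
    · -- 0 ∈ S : everything is a member
      have : ∀ k, (0 : Fin N →₀ ℕ) ∈ sumPow S k := by
        intro k
        induction k with
        | zero => rfl
        | succ k ih => exact ⟨0, h0, 0, ih, (add_zero (0:Fin N →₀ ℕ)).symm⟩
      exact ⟨0, this n, zero_le⟩
    -- main case
    have hIH : ∀ k < n, ∀ b, Symb S k b → Mem S k b := by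
      intro k hk b hb
      rcases Nat.eq_zero_or_pos k with rfl | hpos
      · exact Mem.zero b
      · exact ((IH k hk) hpos b).mp hb
    set L := tot a with hL
    have hLn : n ≤ L := by
      have huniv : Trans S Finset.univ := by
        intro d hd
        by_contra hcon
        push_neg at hcon
        apply h0
        have : d = 0 := by
          ext i
          exact hcon i (Finset.mem_univ i)
        exact this ▸ hd
      have := hs Finset.univ huniv
      simpa [degT, tot, hL] using this
    have hL2 : 2 ≤ L := le_trans h2 hLn
    -- choose e with 2^e ≥ L * L
    obtain ⟨e, he⟩ : ∃ e, L * L ≤ 2^e := ⟨L*L, le_of_lt Nat.lt_two_pow_self⟩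
    set t := 2^e / (L-1) + 1 with ht
    have hdiv : L ≤ 2^e / (L-1) := by
      rw [Nat.le_div_iff_mul_le (by omega)]
      calc L * (L-1) ≤ L * L := Nat.mul_le_mul_left L (by omega)
      _ ≤ 2^e := he
    have ht1 : 2^e ≤ t * (L-1) := by
      have h := Nat.div_add_mod (2^e) (L-1)
      have hmod : 2^e % (L-1) < L-1 := Nat.mod_lt _ (by omega)
      have hcomm : (L-1) * (2^e/(L-1)) = 2^e/(L-1) * (L-1) := Nat.mul_comm _ _
      have hexp : t * (L-1) = 2^e/(L-1) * (L-1) + (L-1) := by rw [ht]; ring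
      omega
    have ht2 : t * (L - n) < 2^e := by
      set D := 2^e / (L-1) with hD
      have hsplit : D * (L - n) + D * (n-1) = D * (L-1) := by
        rw [← Nat.mul_add]
        congr 1
        omega
      have hDL : D * (L-1) ≤ 2^e := Nat.div_mul_le_self _ _
      have hDn : D ≤ D * (n-1) := Nat.le_mul_of_pos_right D (by omega)
      have hLD : L - n < D := by omega
      calc t * (L-n) = D * (L-n) + (L-n) := by rw [ht]; ring
      _ < D * (L-n) + D := by omega
      _ ≤ D * (L-n) + D * (n-1) := by omega
      _ ≤ 2^e := by omega
    set K := 2^e + t with hK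
    -- decompose t • a into K removal pieces
    obtain ⟨ms, hcard, hsum, hms⟩ := decomp K (t • a) a
      (by
        have : tot (t • a) = t * L := by
          simp [tot, Finsupp.smul_apply, Finset.mul_sum, hL]
        rw [this, hK]
        have h4 : t * L = t * (L-1) + t * 1 := mul_split t L 1 (by omega)
        have h5 : t * 1 = t := Nat.mul_one t
        omega)
      (fun i => by
        simp [Finsupp.smul_apply]
        have : t ≤ K := by omega
        exact Nat.mul_le_mul_right _ this)
    -- each piece a - r is a member of level n - tot r
    have hpieces : ∀ r ∈ ms, Mem S (n - tot r) (a - r) := by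
      intro r hr
      obtain ⟨hra, hrt⟩ := hms r hr
      exact hIH (n - tot r) (by omega) _ (hs.sub)
    have hbig := Mem.multiset_sum (fun r => n - tot r) (fun r => a - r) ms hpieces
    have hsum_pieces : (ms.map (fun r => a - r)).sum ≤ (2^e) • a := by
      intro i
      have happ : ∀ (mm : Multiset (Fin N →₀ ℕ)), (mm.sum) i = (mm.map (fun r => r i)).sum := by
        intro mm
        induction mm using Multiset.induction with
        | empty => simp
        | cons x s ih => simp [Finsupp.add_apply, ih]
      rw [happ]
      have hsum_i : (ms.map (fun r => r i)).sum = t * a i := by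
        have := DFunLike.congr_fun hsum i
        rw [happ] at this
        simpa [Finsupp.smul_apply] using this
      rw [Multiset.map_map]
      have : (ms.map fun r => (a - r) i) = ms.map (fun r => a i - r i) := by
        apply Multiset.map_congr rfl
        intro r _
        simp [Finsupp.tsub_apply]
      rw [show ((fun c : Fin N →₀ ℕ => c i) ∘ (fun r => a - r)) = (fun r => (a-r) i) from rfl,
        this]
      -- now: sum of (a i - r i) over ms ≤ 2^e * a i
      have hcomb : (ms.map (fun r => a i - r i)).sum + (ms.map (fun r => r i)).sum
          = (ms.map (fun r => a i - r i + r i)).sum := by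
        rw [← Multiset.sum_map_add]
      have hsub : (ms.map (fun r => a i - r i + r i)).sum = (ms.map (fun _ => a i)).sum := by
        apply congrArg
        apply Multiset.map_congr rfl
        intro r hr
        have := (hms r hr).1 i
        omega
      have hconst : (ms.map (fun _ => a i)).sum = K * a i := by
        rw [Multiset.map_const', Multiset.sum_replicate, hcard]
        simp [smul_eq_mul]
      simp only [Finsupp.smul_apply, smul_eq_mul]
      have hKt : K * a i = 2^e * a i + t * a i := by rw [hK]; ring
      omega
    -- total level count
    have hlevel : 2^e * (n-1) + 1 ≤ (ms.map (fun r => n - tot r)).sum := by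
      have h1 : (ms.map (fun r => n - tot r)).sum + (ms.map tot).sum
          ≥ (ms.map (fun _ => n)).sum := by
        have : ∀ (mm : Multiset (Fin N →₀ ℕ)),
            (mm.map (fun r => n - tot r)).sum + (mm.map tot).sum ≥ (mm.map (fun _ => n)).sum := by
          intro mm
          induction mm using Multiset.induction with
          | empty => simp
          | cons x s ih => simp only [Multiset.map_cons, Multiset.sum_cons]; omega
        exact this ms
      have htots : (ms.map tot).sum = t * L := by
        rw [← tot_multiset_sum, hsum]
        simp [tot, Finsupp.smul_apply, Finset.mul_sum, hL]
      have hconst : (ms.map (fun _ => n)).sum = K * n := by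
        rw [Multiset.map_const', Multiset.sum_replicate, hcard]
        simp [smul_eq_mul]
      have hKn : K * n = 2^e * n + t * n := by rw [hK]; ring
      have htLn : t * L = t * (L - n) + t * n := mul_split t L n (by omega)
      have hen : 2^e * n = 2^e * (n-1) + 2^e * 1 := mul_split (2^e) n 1 (by omega)
      have hen1 : 2^e * 1 = 2^e := Nat.mul_one _
      omega
    have hmem_big : Mem S (2^e * (n-1) + 1) ((2^e) • a) :=
      ((hbig.anti hlevel).mono hsum_pieces)
    have := descent hc e (n-1) a hmem_big
    have hnn : (n-1) + 1 = n := by omega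
    rwa [hnn] at this

/-- The combinatorial heart of the theorem -/
theorem comb_main (hsf : ∀ d ∈ S, ∀ i, d i ≤ 1) :
    (∀ ℓ, 1 ≤ ℓ → ∀ a, Symb S ℓ a ↔ Mem S ℓ a) ↔ Cond S :=
  ⟨cond_of_eq, eq_of_cond hsf⟩

end SFM

namespace SFM

open MvPolynomial

variable {K : Type*} [Field K] {N : ℕ}

/-- the monomial ideal on a set of exponents -/
noncomputable def mIdeal (G : Set (Fin N →₀ ℕ)) : Ideal (MvPolynomial (Fin N) K) :=
  Ideal.span ((fun d => (monomial d (1 : K))) '' G)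

lemma mem_mIdeal_iff {G : Set (Fin N →₀ ℕ)} {f : MvPolynomial (Fin N) K} :
    f ∈ mIdeal (K := K) G ↔ ∀ m ∈ f.support, ∃ g ∈ G, g ≤ m := by
  classical
  constructor
  · intro hf
    -- the set of such polynomials is an ideal
    let P : Ideal (MvPolynomial (Fin N) K) :=
      { carrier := {f | ∀ m ∈ f.support, ∃ g ∈ G, g ≤ m}
        zero_mem' := by simp
        add_mem' := by
          intro p q hp hq m hm
          rcases Finset.mem_union.mp (MvPolynomial.support_add hm) with h | h
          · exact hp m h
          · exact hq m h
        smul_mem' := by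
          intro c p hp m hm
          have := MvPolynomial.support_mul c p hm
          rw [Finset.mem_add] at this
          obtain ⟨m₁, hm₁, m₂, hm₂, rfl⟩ := this
          obtain ⟨g, hg, hgm⟩ := hp m₂ hm₂
          exact ⟨g, hg, hgm.trans le_add_self⟩ }
    have hle : mIdeal (K := K) G ≤ P := by
      apply Ideal.span_le.mpr
      rintro _ ⟨d, hd, rfl⟩
      intro m hm
      rw [MvPolynomial.support_monomial] at hm
      simp at hm
      exact ⟨d, hd, le_of_eq hm.symm⟩
    exact hle hf
  · intro h
    rw [show f = f.support.sum (fun m => monomial m (coeff m f)) from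
      f.support_sum_monomial_coeff.symm]
    apply Ideal.sum_mem
    intro m hm
    obtain ⟨g, hg, hgm⟩ := h m hm
    have : monomial m (coeff m f) = monomial (m - g) (coeff m f) * monomial g 1 := by
      rw [MvPolynomial.monomial_mul, mul_one, tsub_add_cancel_of_le hgm]
    rw [this]
    exact Ideal.mul_mem_left _ _ (Ideal.subset_span ⟨g, hg, rfl⟩)

lemma mIdeal_mul (G H : Set (Fin N →₀ ℕ)) :
    mIdeal (K := K) G * mIdeal (K := K) H = mIdeal (K := K) (Set.image2 (· + ·) G H) := by
  unfold mIdeal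
  rw [Ideal.span_mul_span']
  congr 1
  ext f
  constructor
  · rintro ⟨_, ⟨g, hg, rfl⟩, _, ⟨h, hh, rfl⟩, rfl⟩
    refine ⟨g + h, ⟨g, hg, h, hh, rfl⟩, ?_⟩
    show monomial (g + h) (1:K) = monomial g 1 * monomial h 1
    rw [MvPolynomial.monomial_mul, mul_one]
  · rintro ⟨_, ⟨g, hg, h, hh, rfl⟩, rfl⟩
    refine ⟨monomial g 1, ⟨g, hg, rfl⟩, monomial h 1, ⟨h, hh, rfl⟩, ?_⟩
    show monomial g (1:K) * monomial h 1 = monomial (g + h) 1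
    rw [MvPolynomial.monomial_mul, mul_one]

lemma mIdeal_pow (G : Set (Fin N →₀ ℕ)) (k : ℕ) :
    (mIdeal (K := K) G) ^ k = mIdeal (K := K) (sumPow G k) := by
  induction k with
  | zero =>
      rw [pow_zero, Ideal.one_eq_top, eq_comm, Ideal.eq_top_iff_one]
      have h1 : (1 : MvPolynomial (Fin N) K) = monomial 0 1 := by simp
      rw [h1]
      exact Ideal.subset_span ⟨0, rfl, rfl⟩
  | succ k ih =>
      rw [pow_succ, ih, mul_comm, mIdeal_mul]
      rfl

lemma monomial_mem_mIdeal_iff {G : Set (Fin N →₀ ℕ)} {a : Fin N →₀ ℕ} :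
    (monomial a (1 : K)) ∈ mIdeal (K := K) G ↔ ∃ g ∈ G, g ≤ a := by
  classical
  rw [mem_mIdeal_iff]
  constructor
  · intro h
    exact h a (by rw [MvPolynomial.support_monomial]; simp)
  · intro h m hm
    rw [MvPolynomial.support_monomial] at hm
    simp at hm
    exact hm ▸ h

end SFM

namespace SFM

open MvPolynomial

variable {K : Type*} [Field K] {N : ℕ}

/-- exponents of the variables indexed by T -/
def singles (T : Finset (Fin N)) : Set (Fin N →₀ ℕ) :=
  {g | ∃ i ∈ T, g = Finsupp.single i 1}

/-- the prime generated by variables in T -/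
noncomputable def PT (T : Finset (Fin N)) : Ideal (MvPolynomial (Fin N) K) :=
  mIdeal (singles T)

lemma trans_singles (T : Finset (Fin N)) : Trans (singles T) T := by
  rintro d ⟨i, hi, rfl⟩
  exact ⟨i, hi, by simp⟩

lemma mem_sumPow_singles_iff {T : Finset (Fin N)} {ℓ : ℕ} {m : Fin N →₀ ℕ} :
    (∃ g ∈ sumPow (singles T) ℓ, g ≤ m) ↔ ℓ ≤ degT T m := by
  constructor
  · intro h
    exact Mem.symb h T (trans_singles T)
  · intro h
    induction ℓ generalizing m with
    | zero => exact ⟨0, rfl, zero_le⟩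
    | succ ℓ ih =>
        have hex : ∃ i ∈ T, 1 ≤ m i := by
          by_contra hno
          push_neg at hno
          have : degT T m = 0 := Finset.sum_eq_zero fun i hi => by have := hno i hi; omega
          omega
        obtain ⟨i, hiT, him⟩ := hex
        have hsle : Finsupp.single i 1 ≤ m := Finsupp.single_le_iff.mpr him
        have hms : m - Finsupp.single i 1 + Finsupp.single i 1 = m := tsub_add_cancel_of_le hsle
        have hdeg1 : degT T (Finsupp.single i 1) = 1 := by
          simp [degT, Finsupp.single_apply, Finset.sum_ite_eq, hiT]
        have hd : degT T (m - Finsupp.single i 1) + 1 = degT T m := by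
          conv_rhs => rw [← hms]
          rw [degT_add, hdeg1]
        obtain ⟨g, hg, hgm⟩ := ih (m := m - Finsupp.single i 1) (by omega)
        refine ⟨Finsupp.single i 1 + g, ⟨Finsupp.single i 1, ⟨i, hiT, rfl⟩, g, hg, rfl⟩, ?_⟩
        calc Finsupp.single i 1 + g ≤ Finsupp.single i 1 + (m - Finsupp.single i 1) :=
              add_le_add_right hgm _
        _ = m := by rw [add_comm, hms]

lemma mem_PT_pow_iff {T : Finset (Fin N)} {ℓ : ℕ} {f : MvPolynomial (Fin N) K} :
    f ∈ (PT (K := K) T) ^ ℓ ↔ ∀ m ∈ f.support, ℓ ≤ degT T m := by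
  rw [PT, mIdeal_pow, mem_mIdeal_iff]
  exact forall₂_congr fun m _ => mem_sumPow_singles_iff

/-- the algebra map killing the T variables -/
noncomputable def killT (T : Finset (Fin N)) :
    MvPolynomial (Fin N) K →ₐ[K] MvPolynomial (Fin N) K :=
  aeval (fun i => if i ∈ T then 0 else X i)

lemma killT_monomial_zero {T : Finset (Fin N)} {m : Fin N →₀ ℕ} {c : K}
    (h : ∃ i ∈ T, m i ≠ 0) : killT T (monomial m c) = 0 := by
  classical
  obtain ⟨i, hiT, hmi⟩ := h
  rw [killT, aeval_monomial]
  have hz : (m.prod fun i e => (if i ∈ T then 0 else X i : MvPolynomial (Fin N) K) ^ e) = 0 := by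
    apply Finset.prod_eq_zero (Finsupp.mem_support_iff.mpr hmi)
    show (if i ∈ T then (0 : MvPolynomial (Fin N) K) else X i) ^ m i = 0
    rw [if_pos hiT]
    exact zero_pow hmi
  rw [hz, mul_zero]

lemma killT_monomial_id {T : Finset (Fin N)} {m : Fin N →₀ ℕ} {c : K}
    (h : ∀ i ∈ T, m i = 0) : killT T (monomial m c) = monomial m c := by
  classical
  rw [killT, aeval_monomial]
  have hprod : (m.prod fun i e => (if i ∈ T then 0 else X i : MvPolynomial (Fin N) K) ^ e)
      = m.prod fun i e => (X i) ^ e := by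
    apply Finsupp.prod_congr
    intro i hi
    have hiT : i ∉ T := fun hc => (Finsupp.mem_support_iff.mp hi) (h i hc)
    rw [if_neg hiT]
  rw [hprod, MvPolynomial.monomial_eq]
  rfl

lemma PT_eq_ker (T : Finset (Fin N)) :
    PT (K := K) T = RingHom.ker (killT (K := K) T) := by
  classical
  apply le_antisymm
  · apply Ideal.span_le.mpr
    rintro _ ⟨_, ⟨i, hiT, rfl⟩, rfl⟩
    rw [SetLike.mem_coe, RingHom.mem_ker]
    exact killT_monomial_zero ⟨i, hiT, by simp⟩
  · intro f hf
    rw [RingHom.mem_ker] at hf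
    rw [PT, mem_mIdeal_iff]
    intro m₀ hm₀
    by_contra hno
    push_neg at hno
    have hB : ∀ i ∈ T, m₀ i = 0 := by
      intro i hi
      by_contra hc
      exact hno (Finsupp.single i 1) ⟨i, hi, rfl⟩ (Finsupp.single_le_iff.mpr (by omega))
    -- compute the coefficient of m₀ in killT T f
    have hsum : killT T f = ∑ m ∈ f.support, killT T (monomial m (coeff m f)) := by
      conv_lhs => rw [show f = f.support.sum (fun m => monomial m (coeff m f)) from
        f.support_sum_monomial_coeff.symm]
      exact map_sum _ _ _
    have hcoeff : coeff m₀ (killT T f) = coeff m₀ f := by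
      rw [hsum, MvPolynomial.coeff_sum]
      rw [Finset.sum_eq_single m₀]
      · rw [killT_monomial_id hB, MvPolynomial.coeff_monomial, if_pos rfl]
      · intro m hm hne
        by_cases hA : ∃ i ∈ T, m i ≠ 0
        · rw [killT_monomial_zero hA, MvPolynomial.coeff_zero]
        · push_neg at hA
          rw [killT_monomial_id hA, MvPolynomial.coeff_monomial, if_neg hne]
      · intro hm
        exact absurd hm₀ hm
    rw [hf, MvPolynomial.coeff_zero] at hcoeff
    exact (MvPolynomial.mem_support_iff.mp hm₀) hcoeff.symm

instance PT_isPrime (T : Finset (Fin N)) : (PT (K := K) T).IsPrime := by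
  rw [PT_eq_ker]
  exact RingHom.ker_isPrime _

end SFM

namespace SFM

open MvPolynomial Polynomial

variable {K : Type*} [Field K] {N : ℕ}

/-- grading map: substitute `X i ↦ X i * t` for `i ∈ T` -/
noncomputable def theta (T : Finset (Fin N)) :
    MvPolynomial (Fin N) K →ₐ[K] Polynomial (MvPolynomial (Fin N) K) :=
  MvPolynomial.aeval (fun i => if i ∈ T then Polynomial.C (X i) * Polynomial.X
    else Polynomial.C (X i))

lemma theta_monomial (T : Finset (Fin N)) (m : Fin N →₀ ℕ) (c : K) :
    theta T (monomial m c) = Polynomial.C (monomial m c) * Polynomial.X ^ (degT T m) := by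
  classical
  rw [theta, MvPolynomial.aeval_monomial]
  have hfac : ∀ i ∈ m.support,
      ((if i ∈ T then Polynomial.C (X i : MvPolynomial (Fin N) K) * Polynomial.X
        else Polynomial.C (X i)) ^ m i)
      = Polynomial.C ((X i : MvPolynomial (Fin N) K) ^ m i) *
          Polynomial.X ^ (if i ∈ T then m i else 0) := by
    intro i _
    by_cases hi : i ∈ T
    · rw [if_pos hi, if_pos hi, mul_pow, map_pow]
    · rw [if_neg hi, if_neg hi, map_pow, pow_zero, mul_one]
  rw [Finsupp.prod, Finset.prod_congr rfl hfac, Finset.prod_mul_distrib,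
    Finset.prod_pow_eq_pow_sum, ← map_prod]
  have hdeg : ∑ i ∈ m.support, (if i ∈ T then m i else 0) = degT T m := by
    rw [Finset.sum_ite_mem, degT]
    apply Finset.sum_subset (Finset.inter_subset_right)
    intro i hiT hni
    rw [Finset.mem_inter] at hni
    have : i ∉ m.support := fun hc => hni ⟨hc, hiT⟩
    simpa using this
  rw [hdeg]
  have halg : algebraMap K (Polynomial (MvPolynomial (Fin N) K)) c
      = Polynomial.C (MvPolynomial.C c) := by
    rw [IsScalarTower.algebraMap_apply K (MvPolynomial (Fin N) K), MvPolynomial.algebraMap_eq,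
      Polynomial.algebraMap_eq]
  rw [halg, ← mul_assoc, ← map_mul]
  congr 2
  rw [MvPolynomial.monomial_eq]
  rfl

lemma theta_coeff (T : Finset (Fin N)) (f : MvPolynomial (Fin N) K) (k : ℕ) :
    (theta T f).coeff k
      = ∑ m ∈ f.support, if degT T m = k then monomial m (coeff m f) else 0 := by
  classical
  conv_lhs => rw [show f = f.support.sum (fun m => monomial m (coeff m f)) from
    f.support_sum_monomial_coeff.symm]
  rw [map_sum, Polynomial.finset_sum_coeff]
  apply Finset.sum_congr rfl
  intro m _
  rw [theta_monomial, Polynomial.coeff_C_mul, Polynomial.coeff_X_pow]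
  by_cases h : degT T m = k
  · rw [if_pos h, if_pos h.symm, mul_one]
  · rw [if_neg h, if_neg fun hc => h hc.symm, mul_zero]

lemma mem_PT_pow_iff_theta {T : Finset (Fin N)} {ℓ : ℕ} {f : MvPolynomial (Fin N) K} :
    f ∈ (PT (K := K) T) ^ ℓ ↔ ∀ k < ℓ, (theta T f).coeff k = 0 := by
  classical
  rw [mem_PT_pow_iff]
  constructor
  · intro h k hk
    rw [theta_coeff]
    apply Finset.sum_eq_zero
    intro m hm
    have := h m hm
    rw [if_neg (by omega)]
  · intro h m₀ hm₀
    by_contra hno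
    push_neg at hno
    have hcz := h (degT T m₀) hno
    rw [theta_coeff] at hcz
    have := congrArg (MvPolynomial.coeff m₀) hcz
    rw [MvPolynomial.coeff_sum, Finset.sum_eq_single m₀] at this
    · rw [if_pos rfl, MvPolynomial.coeff_monomial, if_pos rfl, MvPolynomial.coeff_zero] at this
      exact (MvPolynomial.mem_support_iff.mp hm₀) this
    · intro m hm hne
      by_cases hd : degT T m = degT T m₀
      · rw [if_pos hd, MvPolynomial.coeff_monomial, if_neg hne]
      · rw [if_neg hd, MvPolynomial.coeff_zero]
    · intro hm
      exact absurd hm₀ hm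

/-- key saturation lemma -/
lemma mem_PT_pow_of_mul {T : Finset (Fin N)} {ℓ : ℕ} {s x : MvPolynomial (Fin N) K}
    (hs : s ∉ PT (K := K) T) (h : s * x ∈ (PT (K := K) T) ^ ℓ) :
    x ∈ (PT (K := K) T) ^ ℓ := by
  by_contra hx
  obtain ⟨k, hk, hck⟩ : ∃ k < ℓ, (theta T x).coeff k ≠ 0 := by
    by_contra hno
    push_neg at hno
    exact hx (mem_PT_pow_iff_theta.mpr hno)
  have hs0 : (theta T s).coeff 0 ≠ 0 := by
    intro hc
    apply hs
    rw [show PT (K := K) T = (PT (K := K) T)^1 from (pow_one _).symm]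
    apply mem_PT_pow_iff_theta.mpr
    intro k' hk'
    interval_cases k'
    exact hc
  have hts : theta T s ≠ 0 := fun hc => hs0 (by rw [hc]; simp)
  have htx : theta T x ≠ 0 := fun hc => hck (by rw [hc]; simp)
  have hntds : (theta T s).natTrailingDegree = 0 :=
    Nat.le_zero.mp (Polynomial.natTrailingDegree_le_of_ne_zero hs0)
  have hntdx : (theta T x).natTrailingDegree ≤ k :=
    Polynomial.natTrailingDegree_le_of_ne_zero hck
  have hmul : theta T (s * x) = theta T s * theta T x := map_mul _ _ _
  have hne : theta T (s * x) ≠ 0 := by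
    rw [hmul]
    exact mul_ne_zero hts htx
  have hntd : (theta T (s * x)).natTrailingDegree < ℓ := by
    rw [hmul, Polynomial.natTrailingDegree_mul hts htx, hntds, zero_add]
    omega
  have := mem_PT_pow_iff_theta.mp h _ hntd
  rw [Polynomial.coeff_natTrailingDegree_eq_zero] at this
  exact hne this

end SFM


variable {K : Type*} [Field K]

/-- The exponent of the initial (leading) term of a polynomial `f` with respect to a
monomial order `mo`: the largest exponent in the support of `f`. -/
noncomputable def leadExp {σ : Type*} (mo : MonomialOrder σ) (f : MvPolynomial σ K) :
    σ →₀ ℕ :=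
  mo.toSyn.symm (f.support.sup ⇑mo.toSyn)

/-- The initial ideal `in_mo(U)`: the ideal generated by the initial monomials of the
nonzero elements of `U`. -/
noncomputable def initialIdeal {σ : Type*} (mo : MonomialOrder σ)
    (U : Ideal (MvPolynomial σ K)) : Ideal (MvPolynomial σ K) :=
  Ideal.span { g | ∃ f ∈ U, f ≠ 0 ∧ g = (monomial (leadExp mo f) (1 : K)) }

/-- `W` is a squarefree monomial ideal: it is generated by monomials with squarefree
exponents. -/
def IsSquarefreeMonomialIdeal {σ : Type*} (W : Ideal (MvPolynomial σ K)) : Prop :=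
  ∃ S : Set (σ →₀ ℕ), (∀ d ∈ S, ∀ i, d i ≤ 1) ∧
    W = Ideal.span ((fun d => (monomial d (1 : K) : MvPolynomial σ K)) '' S)

/-- The symbolic power `I^{(n)} = ⋂_{p ∈ Min(I)} (pⁿ R_p ∩ R)`. -/
noncomputable def symbolicPower {R : Type*} [CommRing R] (I : Ideal R) (n : ℕ) : Ideal R :=
  ⨅ p : {q : Ideal R // q ∈ I.minimalPrimes},
    letI : p.1.IsPrime := p.2.1.1
    ((p.1 ^ n).map (algebraMap R (Localization.AtPrime p.1))).comap
      (algebraMap R (Localization.AtPrime p.1))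

/-- `W^{[2]}` : the ideal generated by the squares of all the monomials in `W`. -/
noncomputable def bracketTwo {σ : Type*} (W : Ideal (MvPolynomial σ K)) :
    Ideal (MvPolynomial σ K) :=
  Ideal.span { g | ∃ d : σ →₀ ℕ, (monomial d (1 : K)) ∈ W ∧ g = (monomial d (1 : K)) ^ 2 }

namespace SFM

variable {N : ℕ}

lemma comap_map_PT_pow (T : Finset (Fin N)) (ℓ : ℕ) :
    ((((PT (K := K) T) ^ ℓ).map
        (algebraMap _ (Localization.AtPrime (PT (K := K) T)))).comap
      (algebraMap _ (Localization.AtPrime (PT (K := K) T)))) = (PT (K := K) T) ^ ℓ := by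
  apply le_antisymm
  · intro x hx
    rw [Ideal.mem_comap,
      IsLocalization.mem_map_algebraMap_iff (PT (K := K) T).primeCompl] at hx
    obtain ⟨⟨a, s⟩, hx⟩ := hx
    rw [← map_mul] at hx
    obtain ⟨c, hc⟩ := (IsLocalization.eq_iff_exists (PT (K := K) T).primeCompl _).mp hx
    -- hc : ↑c * (x * ↑s) = ↑c * ↑a
    have hmem : (↑c * ↑s : MvPolynomial (Fin N) K) * x ∈ (PT (K := K) T) ^ ℓ := by
      have h1 : (↑c * ↑s : MvPolynomial (Fin N) K) * x = ↑c * (x * ↑s) := by ring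
      rw [h1, hc]
      exact Ideal.mul_mem_left _ _ a.2
    have hns : (↑c * ↑s : MvPolynomial (Fin N) K) ∉ PT (K := K) T :=
      Submonoid.mul_mem _ c.2 s.2
    exact mem_PT_pow_of_mul hns hmem
  · exact Ideal.le_comap_map

lemma X_mem_PT_iff {T : Finset (Fin N)} {i : Fin N} :
    (X i : MvPolynomial (Fin N) K) ∈ PT (K := K) T ↔ i ∈ T := by
  classical
  rw [show (X i : MvPolynomial (Fin N) K) = monomial (Finsupp.single i 1) 1 from rfl,
    show PT (K := K) T = PT (K := K) T ^ 1 from (pow_one _).symm]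
  rw [mem_PT_pow_iff]
  constructor
  · intro h
    have h1 := h (Finsupp.single i 1) (by rw [MvPolynomial.support_monomial]; simp)
    by_contra hiT
    have : degT T (Finsupp.single i 1) = 0 := by
      apply Finset.sum_eq_zero
      intro j hj
      rw [Finsupp.single_apply, if_neg]
      intro hc
      exact hiT (hc ▸ hj)
    omega
  · intro hiT m hm
    rw [MvPolynomial.support_monomial] at hm
    simp at hm
    subst hm
    have : degT T (Finsupp.single i 1) = 1 := by
      simp [degT, Finsupp.single_apply, Finset.sum_ite_eq, hiT]
    omega

variable {S : Set (Fin N →₀ ℕ)}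

lemma le_PT_iff_trans {T : Finset (Fin N)} :
    mIdeal (K := K) S ≤ PT (K := K) T ↔ Trans S T := by
  classical
  constructor
  · intro h d hd
    have hdW : monomial d (1:K) ∈ mIdeal (K := K) S :=
      monomial_mem_mIdeal_iff.mpr ⟨d, hd, le_refl d⟩
    have := h hdW
    rw [show PT (K := K) T = PT (K := K) T ^ 1 from (pow_one _).symm, mem_PT_pow_iff] at this
    have h1 := this d (by rw [MvPolynomial.support_monomial]; simp)
    by_contra hno
    push_neg at hno
    have : degT T d = 0 := Finset.sum_eq_zero fun i hi => by
      have := hno i hi; omega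
    omega
  · intro ht f hf
    rw [mem_mIdeal_iff] at hf
    rw [show PT (K := K) T = PT (K := K) T ^ 1 from (pow_one _).symm, mem_PT_pow_iff]
    intro m hm
    obtain ⟨d, hd, hdm⟩ := hf m hm
    obtain ⟨i, hiT, hdi⟩ := ht d hd
    calc 1 ≤ d i := by omega
    _ ≤ m i := hdm i
    _ ≤ degT T m := Finset.single_le_sum (fun _ _ => Nat.zero_le _) hiT

/-- the transversal attached to a prime containing W -/
noncomputable def transOf (p : Ideal (MvPolynomial (Fin N) K)) : Finset (Fin N) :=
  @Finset.filter _ (fun i => (X i : MvPolynomial (Fin N) K) ∈ p) (Classical.decPred _)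
    Finset.univ

lemma mem_transOf {p : Ideal (MvPolynomial (Fin N) K)} {i : Fin N} :
    i ∈ transOf p ↔ (X i : MvPolynomial (Fin N) K) ∈ p := by
  rw [transOf, @Finset.mem_filter _ _ (Classical.decPred _)]
  simp

lemma PT_transOf_le {p : Ideal (MvPolynomial (Fin N) K)} :
    PT (K := K) (transOf p) ≤ p := by
  apply Ideal.span_le.mpr
  rintro _ ⟨_, ⟨i, hi, rfl⟩, rfl⟩
  exact mem_transOf.mp hi

lemma le_PT_transOf {p : Ideal (MvPolynomial (Fin N) K)} (hp : p.IsPrime)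
    (hWp : mIdeal (K := K) S ≤ p) : mIdeal (K := K) S ≤ PT (K := K) (transOf p) := by
  rw [le_PT_iff_trans]
  intro d hd
  have hdp : monomial d (1:K) ∈ p := hWp (monomial_mem_mIdeal_iff.mpr ⟨d, hd, le_refl d⟩)
  have heq : monomial d (1:K) = ∏ i ∈ d.support, (X i : MvPolynomial (Fin N) K) ^ d i := by
    rw [MvPolynomial.monomial_eq, map_one, one_mul]
    rfl
  rw [heq] at hdp
  have : ∃ i ∈ d.support, (X i : MvPolynomial (Fin N) K) ^ d i ∈ p :=
    (Ideal.IsPrime.prod_mem_iff (hp := hp)).mp hdp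
  obtain ⟨i, hisupp, hpow⟩ := this
  refine ⟨i, ?_, Finsupp.mem_support_iff.mp hisupp⟩
  exact mem_transOf.mpr (hp.mem_of_pow_mem _ hpow)

lemma minimalPrime_eq {p : Ideal (MvPolynomial (Fin N) K)}
    (hp : p ∈ (mIdeal (K := K) S).minimalPrimes) :
    p = PT (K := K) (transOf p) := by
  have hprime : p.IsPrime := hp.1.1
  have hWp : mIdeal (K := K) S ≤ p := hp.1.2
  have h1 : mIdeal (K := K) S ≤ PT (K := K) (transOf p) := le_PT_transOf hprime hWp
  have h2 : PT (K := K) (transOf p) ≤ p := PT_transOf_le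
  exact le_antisymm (hp.2 ⟨PT_isPrime _, h1⟩ h2) h2

/-- characterization of the symbolic power of a squarefree-type monomial ideal -/
lemma mem_symbolicPower_iff {ℓ : ℕ} {f : MvPolynomial (Fin N) K} :
    f ∈ symbolicPower (mIdeal (K := K) S) ℓ ↔
      ∀ T : Finset (Fin N), Trans S T → ∀ m ∈ f.support, ℓ ≤ degT T m := by
  rw [symbolicPower, Submodule.mem_iInf]
  constructor
  · intro h T hT m hm
    have hle : mIdeal (K := K) S ≤ PT (K := K) T := le_PT_iff_trans.mpr hT
    obtain ⟨q, hq, hqle⟩ := Ideal.exists_minimalPrimes_le (J := PT (K := K) T) hle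
    obtain ⟨T₀, rfl⟩ : ∃ T₀, q = PT (K := K) T₀ := ⟨transOf q, minimalPrime_eq hq⟩
    have hmemq : f ∈ (PT (K := K) T₀) ^ ℓ := by
      rw [← comap_map_PT_pow (K := K) T₀ ℓ]
      exact h ⟨PT (K := K) T₀, hq⟩
    rw [mem_PT_pow_iff] at hmemq
    have hsub : T₀ ⊆ T := by
      intro i hi
      exact X_mem_PT_iff.mp (hqle (X_mem_PT_iff.mpr hi))
    exact le_trans (hmemq m hm) (degT_mono_set hsub m)
  · intro h p
    obtain ⟨q, hq⟩ := p
    obtain ⟨T₀, rfl⟩ : ∃ T₀, q = PT (K := K) T₀ := ⟨transOf q, minimalPrime_eq hq⟩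
    have hT : Trans S T₀ := le_PT_iff_trans.mp hq.1.2
    have hfq : f ∈ (PT (K := K) T₀) ^ ℓ := by
      rw [mem_PT_pow_iff]
      exact fun m hm => h T₀ hT m hm
    exact Ideal.le_comap_map hfq

end SFM

namespace SFM

variable {N : ℕ} {S : Set (Fin N →₀ ℕ)}

lemma sq_monomial (d : Fin N →₀ ℕ) :
    (monomial d (1:K)) ^ 2 = monomial (d + d) (1:K) := by
  rw [sq, MvPolynomial.monomial_mul, one_mul]

lemma monomial_mem_pow_iff {k : ℕ} {a : Fin N →₀ ℕ} :
    (monomial a (1:K)) ∈ (mIdeal (K := K) S) ^ k ↔ Mem S k a := by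
  rw [mIdeal_pow, monomial_mem_mIdeal_iff]
  rfl

lemma bracketTwo_pow_eq (r : ℕ) :
    bracketTwo ((mIdeal (K := K) S) ^ (r+1))
      = mIdeal (K := K) {e | ∃ d, Mem S (r+1) d ∧ e = d + d} := by
  rw [bracketTwo, mIdeal]
  congr 1
  ext g
  constructor
  · rintro ⟨d, hd, rfl⟩
    exact ⟨d + d, ⟨d, monomial_mem_pow_iff.mp hd, rfl⟩, (sq_monomial d).symm⟩
  · rintro ⟨_, ⟨d, hd, rfl⟩, rfl⟩
    exact ⟨d, monomial_mem_pow_iff.mpr hd, (sq_monomial d).symm⟩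

lemma monomial_mem_bracketTwo_iff {r : ℕ} {b : Fin N →₀ ℕ} :
    (monomial b (1:K)) ∈ bracketTwo ((mIdeal (K := K) S) ^ (r+1))
      ↔ ∃ d, Mem S (r+1) d ∧ d + d ≤ b := by
  rw [bracketTwo_pow_eq, monomial_mem_mIdeal_iff]
  constructor
  · rintro ⟨_, ⟨d, hd, rfl⟩, hle⟩
    exact ⟨d, hd, hle⟩
  · rintro ⟨d, hd, hle⟩
    exact ⟨d + d, ⟨d, hd, rfl⟩, hle⟩

lemma prod_monomial_single (s : Finset (Fin N)) (f : Fin N → (Fin N →₀ ℕ)) :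
    (∏ i ∈ s, (monomial (f i) (1:K))) = monomial (∑ i ∈ s, f i) (1:K) := by
  classical
  induction s using Finset.induction with
  | empty => simp
  | insert _ _ hnotmem ih =>
      rw [Finset.prod_insert hnotmem, Finset.sum_insert hnotmem, ih,
        MvPolynomial.monomial_mul, one_mul]

lemma prod_X_eq : (∏ i, (X i : MvPolynomial (Fin N) K)) = monomial (ones N) (1:K) := by
  have h1 : ∀ i : Fin N, (X i : MvPolynomial (Fin N) K) = monomial (Finsupp.single i 1) 1 :=
    fun i => rfl
  have hsum : (∑ i : Fin N, Finsupp.single i (1:ℕ)) = ones N := by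
    ext j
    rw [Finsupp.finset_sum_apply]
    simp [Finsupp.single_apply, Finset.sum_ite_eq]
  rw [Finset.prod_congr rfl (fun i _ => h1 i), prod_monomial_single, hsum]

lemma colon_iff {r : ℕ} :
    (monomial (ones N) (1:K)) ∈
        Submodule.colon (bracketTwo ((mIdeal (K := K) S) ^ (r+1)))
          (((mIdeal (K := K) S) ^ (2*r+1) : Ideal (MvPolynomial (Fin N) K)) : Set (MvPolynomial (Fin N) K))
      ↔ ∀ a, Mem S (2*r+1) a → ∃ d, Mem S (r+1) d ∧ d + d ≤ a + ones N := by
  rw [Submodule.mem_colon]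
  constructor
  · intro h a ha
    have := h (monomial a 1) (monomial_mem_pow_iff.mpr ha)
    rw [smul_eq_mul, MvPolynomial.monomial_mul, one_mul] at this
    obtain ⟨d, hd, hle⟩ := monomial_mem_bracketTwo_iff.mp this
    exact ⟨d, hd, by rwa [add_comm a (ones N)]⟩
  · intro h p hp
    have hle : (mIdeal (K := K) S) ^ (2*r+1) ≤
        Submodule.comap
          (LinearMap.lsmul (MvPolynomial (Fin N) K) (MvPolynomial (Fin N) K)
            (monomial (ones N) (1:K)))
          (bracketTwo ((mIdeal (K := K) S) ^ (r+1))) := by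
      rw [mIdeal_pow, mIdeal]
      apply Ideal.span_le.mpr
      rintro _ ⟨g, hg, rfl⟩
      rw [SetLike.mem_coe, Submodule.mem_comap, LinearMap.lsmul_apply, smul_eq_mul,
        MvPolynomial.monomial_mul, one_mul]
      obtain ⟨d, hd, hled⟩ := h g ⟨g, hg, le_refl g⟩
      exact monomial_mem_bracketTwo_iff.mpr ⟨d, hd, by rwa [add_comm (ones N) g]⟩
    exact hle hp

/-- symbolic power = ordinary power for all ℓ iff combinatorial equality -/
lemma symb_eq_pow_iff :
    (∀ ℓ, 1 ≤ ℓ → symbolicPower (mIdeal (K := K) S) ℓ = (mIdeal (K := K) S) ^ ℓ)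
      ↔ (∀ ℓ, 1 ≤ ℓ → ∀ a, Symb S ℓ a ↔ Mem S ℓ a) := by
  constructor
  · intro h ℓ hℓ a
    constructor
    · intro hs
      rw [← monomial_mem_pow_iff (K := K), ← h ℓ hℓ]
      apply mem_symbolicPower_iff.mpr
      intro T hT m hm
      classical
      rw [MvPolynomial.support_monomial, if_neg one_ne_zero] at hm
      rw [Finset.mem_singleton] at hm
      exact hm ▸ hs T hT
    · exact Mem.symb
  · intro hcomb ℓ hℓ
    apply le_antisymm
    · intro f hf
      rw [mIdeal_pow, mem_mIdeal_iff]
      intro m hm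
      exact (hcomb ℓ hℓ m).mp (fun T hT => mem_symbolicPower_iff.mp hf T hT m hm)
    · intro f hf
      apply mem_symbolicPower_iff.mpr
      intro T hT m hm
      rw [mIdeal_pow, mem_mIdeal_iff] at hf
      exact Mem.symb (hf m hm) T hT

end SFM

/-- Montaño–Núñez-Betancourt criterion. For a squarefree monomial
ideal `W`, `W^{(ℓ)} = W^ℓ` for all `ℓ ≥ 1` iff for every `r ≥ 0` the product `ν` of
all the variables lies in `(W^{r+1})^{[2]} : W^{2r+1}`. -/
theorem stmt_11 (N : ℕ) (W : Ideal (MvPolynomial (Fin N) K))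
    (hW : IsSquarefreeMonomialIdeal W) :
    (∀ ℓ, 1 ≤ ℓ → symbolicPower W ℓ = W ^ ℓ) ↔
      ∀ r : ℕ, (∏ i, (X i : MvPolynomial (Fin N) K)) ∈
        Submodule.colon (bracketTwo (W ^ (r + 1))) ((W ^ (2 * r + 1) : Ideal (MvPolynomial (Fin N) K)) : Set (MvPolynomial (Fin N) K)) := by
  obtain ⟨S, hsf, rfl⟩ := hW
  have hW' : Ideal.span ((fun d => (monomial d (1 : K) : MvPolynomial (Fin N) K)) '' S)
      = SFM.mIdeal (K := K) S := rfl
  rw [hW', SFM.symb_eq_pow_iff, SFM.comb_main hsf]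
  unfold SFM.Cond
  constructor
  · intro h r
    rw [SFM.prod_X_eq]
    exact SFM.colon_iff.mpr (h r)
  · intro h r
    have hr := h r
    rw [SFM.prod_X_eq] at hr
    exact SFM.colon_iff.mp hr
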